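/- arXiv:1007.0552 — 2 statements merged into one kernel-verified Lean document; each statement's English description precedes it below -/
import Mathlib

section
/- Fix k ≥ 1 and exponents e_1, …, e_k ∈ {+1, −1}, and define π : W^(k) → W by π(w_1, …, w_k) = w_1^{e_1} ⋯ w_k^{e_k}, where w^{+1} = w and w^{−1} is the formal inverse word. If X ⊆ W^(k) and the image π(X) is exponentially negligible in W, then X is exponentially negligible in W^(k). -/
open Filter

namespace GenericSubgroups

/-- A word over the alphabet `Fin m × Bool` (generator index, with `true` = formal inverse). -/
abbrev Word (m : ℕ) := List (Fin m × Bool)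

/-- The disk of radius `n` : words of length at most `n`. -/
def ball (m n : ℕ) : Set (Word m) := {w | w.length ≤ n}

/-- The sphere of radius `n` : words of length exactly `n`. -/
def sphere (m n : ℕ) : Set (Word m) := {w | w.length = n}

/-- A set of words is exponentially negligible. -/
def ExpNegligible {m : ℕ} (X : Set (Word m)) : Prop :=
  ∃ α : ℝ, 0 < α ∧ α < 1 ∧
    ∀ᶠ n in atTop, ((X ∩ ball m n).ncard : ℝ) / ((ball m n).ncard : ℝ) ≤ α ^ n

/-- A set of words is exponentially generic if its complement is exponentially negligible. -/
def ExpGeneric {m : ℕ} (X : Set (Word m)) : Prop := ExpNegligible Xᶜ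

/-- Disk of radius `n` in the set of `k`-tuples of words. -/
def ballK (m k n : ℕ) : Set (Fin k → Word m) := {w | ∀ i, (w i).length ≤ n}

def ExpNegligibleK {m k : ℕ} (X : Set (Fin k → Word m)) : Prop :=
  ∃ α : ℝ, 0 < α ∧ α < 1 ∧
    ∀ᶠ n in atTop, ((X ∩ ballK m k n).ncard : ℝ) / ((ballK m k n).ncard : ℝ) ≤ α ^ n

def ExpGenericK {m k : ℕ} (X : Set (Fin k → Word m)) : Prop := ExpNegligibleK Xᶜ

variable {G : Type*} [Group G]

/-- Evaluation of a word in `G`, determined by the family `g` of generators. -/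
def eval {m : ℕ} (g : Fin m → G) (w : Word m) : G :=
  (w.map (fun p => if p.2 then (g p.1)⁻¹ else g p.1)).prod

/-- Word length of an element of `G`. -/
noncomputable def wlen {m : ℕ} (g : Fin m → G) (x : G) : ℕ :=
  sInf {n | ∃ w : Word m, w.length = n ∧ eval g w = x}

/-- Word metric on `G`. -/
noncomputable def wdist {m : ℕ} (g : Fin m → G) (x y : G) : ℕ := wlen g (x⁻¹ * y)

/-- Words of length exactly `n` representing the identity. -/
def V {m : ℕ} (g : Fin m → G) (n : ℕ) : Set (Word m) :=
  {w | w.length = n ∧ eval g w = 1}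

/-- The gross cogrowth `θ = limsup (1/n) log_{2m} |V_n|`. -/
noncomputable def cogrowth {m : ℕ} (g : Fin m → G) : ℝ :=
  limsup (fun n : ℕ => Real.logb (2 * m : ℝ) ((V g n).ncard : ℝ) / (n : ℝ)) atTop

/-- The four-point (quadrilateral) condition with constant `δ` for the word metric. -/
def FourPoint {m : ℕ} (g : Fin m → G) (δ : ℝ) : Prop :=
  ∀ p q r s : G,
    (wdist g p s : ℝ) + (wdist g q r : ℝ) ≤
      2 * δ + max ((wdist g p q : ℝ) + (wdist g r s : ℝ)) ((wdist g p r : ℝ) + (wdist g q s : ℝ))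

/-- The Gromov product `(x|y)_1` with respect to the word metric. -/
noncomputable def gp {m : ℕ} (g : Fin m → G) (x y : G) : ℝ :=
  ((wlen g x : ℝ) + (wlen g y : ℝ) - (wlen g (x⁻¹ * y) : ℝ)) / 2

/-- `x^e` where `e : Bool`, `true` meaning inverse. -/
def powB (x : G) (e : Bool) : G := if e then x⁻¹ else x

/-- Formal inverse of a word. -/
def winv {m : ℕ} (w : Word m) : Word m := (w.reverse).map (fun p => (p.1, !p.2))


/-!
A tuple in the disk `W^(k)_n` is determined by its image under `π`, which lies in `W_{kn}`,
together with the lengths of its entries, for which there are `(n + 1)^k` choices. Cutting words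
into blocks gives `|W_{kn}| ≤ |W_n|^k = |W^(k)_n|`, so the density of `X` in `W^(k)_n` is at most
`(n + 1)^k` times the density of `π(X)` in `W_{kn}`, hence at most `(n + 1)^k α^{kn} ≤ (n + 1)^k α^n`;
the polynomial factor is absorbed by any base in `(α, 1)`.
-/

open Topology

theorem winv_involutive {m : ℕ} : Function.Involutive (winv (m := m)) := fun w => by
  simp [winv, List.map_reverse, Function.comp_def]

@[simp]
theorem length_winv {m : ℕ} (w : Word m) : (winv w).length = w.length := by simp [winv]

theorem _root_.List.eq_of_flatten_eq_of_map_length_eq {α : Type*} :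
    ∀ {L₁ L₂ : List (List α)},
      L₁.map List.length = L₂.map List.length → L₁.flatten = L₂.flatten → L₁ = L₂
  | [], [], _, _ => rfl
  | a :: L₁, b :: L₂, hlen, hflat => by
    simp only [List.map_cons, List.cons.injEq] at hlen
    obtain ⟨rfl, htail⟩ := List.append_inj hflat hlen.1
    rw [List.eq_of_flatten_eq_of_map_length_eq hlen.2 htail]

theorem ball_finite (m n : ℕ) : (ball m n).Finite := List.finite_length_le _ n

theorem ncard_ball_pos (m n : ℕ) : 0 < (ball m n).ncard :=
  (Set.ncard_pos (ball_finite m n)).2 ⟨[], Nat.zero_le n⟩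

theorem ncard_ballK (m k n : ℕ) : (ballK m k n).ncard = (ball m n).ncard ^ k := by
  have hpi : ballK m k n = Set.univ.pi fun _ : Fin k => ball m n := by
    ext w; simp [ballK, ball]
  rw [hpi, ← Nat.card_coe_set_eq, Nat.card_congr (Equiv.Set.univPi _), Nat.card_pi]
  simp [← Nat.card_coe_set_eq]

theorem ncard_ball_mul_le (m k n : ℕ) : (ball m (k * n)).ncard ≤ (ball m n).ncard ^ k := by
  induction k with
  | zero => simp [ball]
  | succ k ih =>
    have hsplit : ball m ((k + 1) * n) ⊆
        (fun p : Word m × Word m => p.1 ++ p.2) '' (ball m n ×ˢ ball m (k * n)) := by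
      intro w hw
      have hlen : w.length ≤ k * n + n := by simpa [ball, Nat.succ_mul] using hw
      refine ⟨(w.take n, w.drop n), ⟨?_, ?_⟩, w.take_append_drop n⟩
      · simp [ball]
      · simp only [ball, Set.mem_ofPred_eq, List.length_drop]
        omega
    have hprod_finite := (ball_finite m n).prod (ball_finite m (k * n))
    calc (ball m ((k + 1) * n)).ncard
        ≤ (ball m n ×ˢ ball m (k * n)).ncard :=
          (Set.ncard_le_ncard hsplit (hprod_finite.image _)).trans (Set.ncard_image_le hprod_finite)
      _ ≤ (ball m n).ncard ^ (k + 1) := by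
          rw [Set.ncard_prod, pow_succ']
          exact Nat.mul_le_mul_left _ ih

/-- The paper's `π(w₁, …, w_k) = w₁^{e₁} ⋯ w_k^{e_k}`; `e i = true` means `e_i = -1`. -/
def signedProduct {m k : ℕ} (e : Fin k → Bool) (w : Fin k → Word m) : Word m :=
  (List.ofFn fun i => if e i then winv (w i) else w i).flatten

section signedProduct

variable {m k : ℕ} (e : Fin k → Bool)

theorem length_signedProduct (w : Fin k → Word m) :
    (signedProduct e w).length = ∑ i, (w i).length := by
  simp [signedProduct, List.length_flatten, List.map_ofFn, Function.comp_def, List.sum_ofFn,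
    apply_ite List.length]

theorem signedProduct_mem_ball {n : ℕ} {w : Fin k → Word m} (hw : w ∈ ballK m k n) :
    signedProduct e w ∈ ball m (k * n) := by
  simpa [ball, length_signedProduct] using Finset.sum_le_card_nsmul Finset.univ _ n fun i _ => hw i

theorem signedProduct_prod_lengths_injective :
    Function.Injective fun w : Fin k → Word m => (signedProduct e w, fun i => (w i).length) := by
  intro w w' hww'
  simp only [Prod.mk.injEq] at hww'
  obtain ⟨hprod, hlen⟩ := hww'
  have hfactors := List.eq_of_flatten_eq_of_map_length_eq
    (by simp [List.map_ofFn, Function.comp_def, apply_ite List.length, congrFun hlen]) hprod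
  funext i
  have hi := congrFun (List.ofFn_inj.1 hfactors) i
  split_ifs at hi
  exacts [winv_involutive.injective hi, hi]

theorem ncard_inter_ballK_le (X : Set (Fin k → Word m)) (n : ℕ) :
    (X ∩ ballK m k n).ncard ≤
      (signedProduct e '' X ∩ ball m (k * n)).ncard * (n + 1) ^ k := by
  let lengths : Set (Fin k → ℕ) := ↑(Fintype.piFinset fun _ : Fin k => Finset.range (n + 1))
  have hlengths : lengths.ncard = (n + 1) ^ k := by
    rw [Set.ncard_coe_finset, Fintype.card_piFinset]
    simp
  rw [← hlengths, ← Set.ncard_prod]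
  refine Set.ncard_le_ncard_of_injOn _
    (fun w hw => ⟨⟨⟨w, hw.1, rfl⟩, signedProduct_mem_ball e hw.2⟩,
      by simpa [lengths, Nat.lt_succ_iff] using hw.2.out⟩)
    (signedProduct_prod_lengths_injective e).injOn
    (((ball_finite m _).subset Set.inter_subset_right).prod (Set.toFinite _))

end signedProduct

theorem ncard_inter_ballK_div_le {m k : ℕ} (e : Fin k → Bool) (X : Set (Fin k → Word m))
    (n : ℕ) :
    ((X ∩ ballK m k n).ncard : ℝ) / (ballK m k n).ncard ≤
      ((n : ℝ) + 1) ^ k *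
        ((signedProduct e '' X ∩ ball m (k * n)).ncard / (ball m (k * n)).ncard) := by
  have hball : ((ball m (k * n)).ncard : ℝ) ≤ (ballK m k n).ncard := by
    exact_mod_cast (ncard_ballK m k n).symm ▸ ncard_ball_mul_le m k n
  have hcount : ((X ∩ ballK m k n).ncard : ℝ) ≤
      (signedProduct e '' X ∩ ball m (k * n)).ncard * ((n : ℝ) + 1) ^ k := by
    exact_mod_cast ncard_inter_ballK_le e X n
  calc ((X ∩ ballK m k n).ncard : ℝ) / (ballK m k n).ncard
      ≤ (X ∩ ballK m k n).ncard / (ball m (k * n)).ncard := by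
        gcongr
        exact_mod_cast ncard_ball_pos m (k * n)
    _ ≤ (signedProduct e '' X ∩ ball m (k * n)).ncard * ((n : ℝ) + 1) ^ k /
          (ball m (k * n)).ncard := by gcongr
    _ = _ := by ring

theorem eventually_succ_pow_mul_pow_le {α β : ℝ} (hα : 0 < α) (hαβ : α < β) (k : ℕ) :
    ∀ᶠ n : ℕ in atTop, ((n : ℝ) + 1) ^ k * α ^ n ≤ β ^ n := by
  have hβ : 0 < β := hα.trans hαβ
  set r := α / β
  have hr : 0 < r := div_pos hα hβ
  have hshift : Tendsto (fun n : ℕ => ((n : ℝ) + 1) ^ k * r ^ n) atTop (𝓝 0) := by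
    have := ((tendsto_pow_const_mul_const_pow_of_abs_lt_one k
      (by rwa [abs_of_pos hr, div_lt_one hβ])).comp (tendsto_add_atTop_nat 1)).const_mul r⁻¹
    rw [mul_zero] at this
    refine this.congr fun n => ?_
    simp only [Function.comp_apply, Nat.cast_succ, pow_succ]
    field_simp
  filter_upwards [hshift.eventually_le_const one_pos] with n hn
  calc ((n : ℝ) + 1) ^ k * α ^ n = ((n : ℝ) + 1) ^ k * r ^ n * β ^ n := by
        rw [div_pow, mul_assoc, div_mul_cancel₀ _ (pow_ne_zero n hβ.ne')]
    _ ≤ β ^ n := mul_le_of_le_one_left (by positivity) hn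

theorem exponentially_negligible_of_image_general (m k : ℕ) (hk : 1 ≤ k)
    (e : Fin k → Bool) (X : Set (Fin k → Word m))
    (h : ExpNegligible
      ((fun w : Fin k → Word m =>
          (List.ofFn (fun i => if e i then winv (w i) else w i)).flatten) '' X)) :
    ExpNegligibleK X := by
  obtain ⟨α, hα0, hα1, himage⟩ := h
  refine ⟨(1 + α) / 2, by linarith, by linarith, ?_⟩
  filter_upwards [(tendsto_id.const_mul_atTop' hk).eventually himage,
    eventually_succ_pow_mul_pow_le hα0 (by linarith : α < (1 + α) / 2) k] with n himage_n hpoly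
  calc ((X ∩ ballK m k n).ncard : ℝ) / (ballK m k n).ncard
      ≤ ((n : ℝ) + 1) ^ k * α ^ (k * n) :=
        (ncard_inter_ballK_div_le e X n).trans (by gcongr; exact himage_n)
    _ ≤ ((n : ℝ) + 1) ^ k * α ^ n := by
        gcongr ?_ * ?_
        exact pow_le_pow_of_le_one hα0.le hα1.le (Nat.le_mul_of_pos_left n hk)
    _ ≤ ((1 + α) / 2) ^ n := hpoly

/-- If the image of `X ⊆ W^(k)` under
`π(w₁, …, w_k) = w₁^{e₁} ⋯ w_k^{e_k}` is exponentially negligible, then so is `X`. -/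
theorem exponentially_negligible_of_image (m k : ℕ) (hm : 2 ≤ m) (hk : 1 ≤ k)
    (e : Fin k → Bool) (X : Set (Fin k → Word m))
    (h : ExpNegligible
      ((fun w : Fin k → Word m =>
          (List.ofFn (fun i => if e i then winv (w i) else w i)).flatten) '' X)) :
    ExpNegligibleK X :=
  exponentially_negligible_of_image_general m k hk e X h

end GenericSubgroups
end

section
/- Let (M, d) be a metric space and δ ≥ 0 such that the four-point condition holds: for all p, q, r, s ∈ M, d(p, s) + d(q, r) ≤ 2δ + max(d(p, q) + d(r, s), d(p, r) + d(q, s)). Let κ > 0, let n ≥ 2, and let p_0, …, p_n ∈ M satisfy d(p_i, p_{i+2}) ≥ κ + 2δ + max(d(p_i, p_{i+1}), d(p_{i+1}, p_{i+2})) for all 0 ≤ i ≤ n−2. Then d(p_0, p_n) ≥ d(p_0, p_{n−1}) + κ ≥ d(p_0, p_1) + (n−1)·κ ≥ κ·n. -/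
open Filter

namespace GenericSubgroups

variable {G : Type*} [Group G]

/-- Lemma `length`: in a metric space satisfying the four-point condition
with constant `δ ≥ 0`, a chain `p₀, …, p_n` (`n ≥ 2`) with
`d(p_i, p_{i+2}) ≥ κ + 2δ + max(d(p_i, p_{i+1}), d(p_{i+1}, p_{i+2}))` satisfies
`d(p₀, p_n) ≥ d(p₀, p_{n-1}) + κ ≥ d(p₀, p₁) + (n-1)κ ≥ κn`. -/
theorem chain_distance_lower_bound {M : Type*} [MetricSpace M] (δ : ℝ) (hδ : 0 ≤ δ)
    (h4 : ∀ p q r s : M,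
      dist p s + dist q r ≤ 2 * δ + max (dist p q + dist r s) (dist p r + dist q s))
    (κ : ℝ) (hκ : 0 < κ) (n : ℕ) (hn : 2 ≤ n) (p : ℕ → M)
    (h : ∀ i : ℕ, i + 2 ≤ n →
      κ + 2 * δ + max (dist (p i) (p (i + 1))) (dist (p (i + 1)) (p (i + 2)))
        ≤ dist (p i) (p (i + 2))) :
    dist (p 0) (p (n - 1)) + κ ≤ dist (p 0) (p n) ∧
    dist (p 0) (p 1) + ((n : ℝ) - 1) * κ ≤ dist (p 0) (p (n - 1)) + κ ∧
    κ * (n : ℝ) ≤ dist (p 0) (p 1) + ((n : ℝ) - 1) * κ := by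
  have core : ∀ j, j + 2 ≤ n → dist (p 0) (p j) < dist (p 0) (p (j+1)) + κ →
      dist (p 0) (p (j+1)) + κ ≤ dist (p 0) (p (j+2)) := by
    intro j hj hlt
    have hchain := h j hj
    have h4' := h4 (p 0) (p j) (p (j+2)) (p (j+1))
    have hcm := dist_comm (p (j+1)) (p (j+2))
    rcases le_total (dist (p 0) (p j) + dist (p (j+2)) (p (j+1)))
        (dist (p 0) (p (j+2)) + dist (p j) (p (j+1))) with hc | hc
    · rw [max_eq_right hc] at h4'
      have := le_max_left (dist (p j) (p (j+1))) (dist (p (j+1)) (p (j+2)))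
      linarith
    · rw [max_eq_left hc] at h4'
      have := le_max_right (dist (p j) (p (j+1))) (dist (p (j+1)) (p (j+2)))
      linarith
  have P : ∀ j, j + 2 ≤ n → dist (p 0) (p j) < dist (p 0) (p (j+1)) + κ ∧
      dist (p 0) (p (j+1)) + κ ≤ dist (p 0) (p (j+2)) := by
    intro j
    induction j with
    | zero =>
      intro hj
      have h0 : dist (p 0) (p 0) = 0 := dist_self _
      have h1 : (0:ℝ) ≤ dist (p 0) (p 1) := dist_nonneg
      exact ⟨by linarith, core 0 hj (by linarith)⟩
    | succ j ih =>
      intro hj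
      have hj' : j + 2 ≤ n := by omega
      obtain ⟨_, hstep⟩ := ih hj'
      have hlt : dist (p 0) (p (j+1)) < dist (p 0) (p (j+2)) + κ := by linarith
      exact ⟨hlt, core (j+1) hj hlt⟩
  have R : ∀ j, j + 1 ≤ n → dist (p 0) (p 1) + (j:ℝ) * κ ≤ dist (p 0) (p (j+1)) := by
    intro j
    induction j with
    | zero => intro _; simp
    | succ j ih =>
      intro hj
      have hj' : j + 2 ≤ n := by omega
      have h1 := ih (by omega)
      have h2 := (P j hj').2
      push_cast
      linarith
  have e1 : n - 2 + 1 = n - 1 := by omega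
  have e2 : n - 2 + 2 = n := by omega
  have hP := (P (n-2) (by omega)).2
  rw [e1, e2] at hP
  have hR := R (n-2) (by omega)
  rw [e1] at hR
  have hcast : ((n - 2 : ℕ) : ℝ) = (n : ℝ) - 2 := by
    rw [Nat.cast_sub hn]; norm_num
  rw [hcast] at hR
  have hκ1 : κ ≤ dist (p 0) (p 1) := by
    have hchain0 := h 0 hn
    have htri := dist_triangle (p 0) (p 1) (p 2)
    have := le_max_right (dist (p 0) (p 1)) (dist (p 1) (p 2))
    simp only [zero_add] at hchain0
    linarith
  have hn2 : (2:ℝ) ≤ (n:ℝ) := by exact_mod_cast hn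
  refine ⟨hP, by linarith, by nlinarith⟩

end GenericSubgroups
end
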